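/- arXiv:math/0310310 — 2 statements merged into one kernel-verified Lean document; each statement's English description precedes it below -/
import Mathlib

section
/- For all packed sequences (S_1,…,S_n) and (T_1,…,T_k), the composite T_{(S_1,…,S_n)} ∘ T_{(T_1,…,T_k)} of endomorphisms of ℬ equals 0 if S_1∪…∪S_n ≠ T_1∪…∪T_k, and otherwise equals T_w, where w is the sequence (S_1∩T_1,…,S_1∩T_k, S_2∩T_1,…,S_2∩T_k, …, S_n∩T_1,…,S_n∩T_k) with all empty intersections deleted. In particular, the twisted descent algebra of the free twisted bialgebra is closed under composition of endomorphisms. -/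
/-!
Twisted descent algebras and the Solomon-Tits algebra (Patras-Schocker).

* A *packed sequence* is a finite sequence of pairwise disjoint nonempty
  finite subsets of ℕ.
* `TD k` is the free twisted descent algebra `𝒯`: the free `k`-module with
  basis `1_w`, `w` a packed sequence.
* `convL` is the convolution product `∗`, `compL` the composition product `∘`,
  `deltaL` the coproduct `δ`.
* `TD k` also realizes the free twisted bialgebra `ℬ` (whose basis words
  `α_{S_1}⋯α_{S_k}` are exactly the packed sequences); `Tmap u` realizes the
  convolution `1_{U_1} ∗ ⋯ ∗ 1_{U_l}` of characteristic maps as an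
  endomorphism of `ℬ`; `BS k S` is the graded piece `ℬ_S` with concatenation
  `mulInto` and deconcatenation `deltaInto`.
-/

open scoped TensorProduct

noncomputable section
namespace TwistedDescent

/-- A sequence of finite subsets of `ℕ`. -/
abbrev PSeq : Type := List (Finset ℕ)

/-- A packed sequence: a finite sequence of pairwise disjoint nonempty finite
subsets of `ℕ`. -/
def Packed (w : PSeq) : Prop :=
  w.Pairwise (fun S T => Disjoint S T) ∧ ∀ S ∈ w, S ≠ ∅

instance : DecidablePred Packed := fun w => by unfold Packed; infer_instance

/-- The type of packed sequences. -/
abbrev PackedSeq : Type := {w : PSeq // Packed w}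

/-- The free twisted descent algebra `𝒯`: the free `k`-module with basis the
packed sequences.  (The same module realizes the free twisted bialgebra `ℬ`,
whose basis words are the packed sequences.) -/
abbrev TD (k : Type) [CommRing k] : Type := PackedSeq →₀ k

variable (k : Type) [CommRing k]

/-- The basis element `1_l` of `𝒯` if `l` is packed, and `0` otherwise. -/
def mk (l : PSeq) : TD k := if h : Packed l then Finsupp.single ⟨l, h⟩ 1 else 0

/-- The union `S_1 ∪ ⋯ ∪ S_k` of the members of a sequence of sets. -/
def unionOf (w : PSeq) : Finset ℕ := w.foldr (· ∪ ·) ∅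

/-- The convolution product `∗` on `𝒯`, as a bilinear map:
`1_{(S_1,…,S_n)} ∗ 1_{(T_1,…,T_m)} = 1_{(S_1,…,S_n,T_1,…,T_m)}` if all the sets
are pairwise disjoint, and `0` otherwise. -/
def convL : TD k →ₗ[k] TD k →ₗ[k] TD k :=
  Finsupp.lsum k fun w => LinearMap.toSpanSingleton k _ <|
    Finsupp.lsum k fun v => LinearMap.toSpanSingleton k _ (mk k (w.1 ++ v.1))

/-- The refinement `(S_1∩T_1,…,S_1∩T_k,…,S_n∩T_1,…,S_n∩T_k)` of two sequences,
with all empty intersections deleted. -/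
def refines (w v : PSeq) : PSeq :=
  w.flatMap fun S => (v.map fun U => S ∩ U).filter fun U => U ≠ ∅

/-- The composition product on basis elements: `0` if the underlying sets
differ, and the refinement otherwise. -/
def compB (w v : PSeq) : TD k :=
  if unionOf w = unionOf v then mk k (refines w v) else 0

/-- The composition product `∘` on `𝒯`, as a bilinear map. -/
def compL : TD k →ₗ[k] TD k →ₗ[k] TD k :=
  Finsupp.lsum k fun w => LinearMap.toSpanSingleton k _ <|
    Finsupp.lsum k fun v => LinearMap.toSpanSingleton k _ (compB k w.1 v.1)

instance : Zero (TD k ⊗[k] TD k) :=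
  (inferInstance : AddZeroClass (TD k ⊗[k] TD k)).toZero

/-- All ways of splitting each block `S_i` of `w` into an ordered pair
`(T_i, U_i)` with `S_i = T_i ⊔ U_i`. -/
def splittings (w : PSeq) : List (List (Finset ℕ × Finset ℕ)) :=
  (w.map fun S => S.powerset.toList.map fun U => (U, S \ U)).sections

/-- Delete all empty sets from a sequence. -/
def strip (l : PSeq) : PSeq := l.filter fun S => S ≠ ∅

/-- The coproduct on a basis element:
`δ(1_{(S_1,…,S_k)}) = Σ 1_{(T_1,…,T_k)^} ⊗ 1_{(U_1,…,U_k)^}` summed over all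
ways of writing `S_i = T_i ⊔ U_i`, where `^` deletes empty sets. -/
def deltaB (w : PackedSeq) : TD k ⊗[k] TD k :=
  ((splittings w.1).map fun p =>
    (mk k (strip (p.map Prod.fst)) ⊗ₜ[k] mk k (strip (p.map Prod.snd)) :
      TD k ⊗[k] TD k)).sum

/-- The coproduct `δ : 𝒯 → 𝒯 ⊗ 𝒯`. -/
def deltaL : TD k →ₗ[k] TD k ⊗[k] TD k :=
  Finsupp.lsum k fun w => LinearMap.toSpanSingleton k _ (deltaB k w)

/-- The componentwise convolution `∗₂` on `𝒯 ⊗ 𝒯`: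
`(a⊗b) ∗₂ (c⊗d) = (a∗c)⊗(b∗d)`. -/
def conv2 : TD k ⊗[k] TD k →ₗ[k] TD k ⊗[k] TD k →ₗ[k] TD k ⊗[k] TD k :=
  (TensorProduct.homTensorHomMap (RingHom.id k) _ _ _ _).comp
    (TensorProduct.map (convL k) (convL k))

/-- The componentwise composition `∘₂` on `𝒯 ⊗ 𝒯`:
`(a⊗b) ∘₂ (c⊗d) = (a∘c)⊗(b∘d)`. -/
def comp2 : TD k ⊗[k] TD k →ₗ[k] TD k ⊗[k] TD k →ₗ[k] TD k ⊗[k] TD k :=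
  (TensorProduct.homTensorHomMap (RingHom.id k) _ _ _ _).comp
    (TensorProduct.map (compL k) (compL k))

/-- The linear map `μ : 𝒯 ⊗ 𝒯 → 𝒯` induced by the convolution product. -/
def muL : TD k ⊗[k] TD k →ₗ[k] TD k := TensorProduct.lift (convL k)

/-- The submodule `𝒯_S` of `𝒯` spanned by the basis elements `1_w` with `w` an
ordered partition of `S`. -/
def TS (S : Finset ℕ) : Submodule k (TD k) :=
  Submodule.span k {x | ∃ w : PackedSeq, unionOf w.1 = S ∧ x = Finsupp.single w 1}

/-- The blocks of `w` contained in `U_1`, in their original relative order,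
then those contained in `U_2`, and so on. -/
def reorder (u w : PSeq) : PSeq := u.flatMap fun U => w.filter fun S => S ⊆ U

/-- Action of `T_u = 1_{U_1} ∗ ⋯ ∗ 1_{U_l}` on a basis word of `ℬ`: the word is
killed unless it has degree `∪ U_j` and each of its blocks is contained in some
`U_j`, in which case the blocks are regrouped along `u`. -/
def TmapB (u : PSeq) (w : PackedSeq) : TD k :=
  if unionOf w.1 = unionOf u ∧ ∀ S ∈ w.1, ∃ U ∈ u, S ⊆ U then mk k (reorder u w.1)
  else 0

/-- The endomorphism `T_u = 1_{U_1} ∗ ⋯ ∗ 1_{U_l}` of the free twisted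
bialgebra `ℬ`. -/
def Tmap (u : PSeq) : Module.End k (TD k) :=
  Finsupp.lsum k fun w => LinearMap.toSpanSingleton k _ (TmapB k u w)

/-- Ordered partitions of the finite set `S`. -/
def OrdPart (S : Finset ℕ) : Type := {w : PSeq // Packed w ∧ unionOf w = S}

/-- The graded component `ℬ_S`: the free `k`-module on the ordered partitions
of `S`. -/
abbrev BS (S : Finset ℕ) : Type := OrdPart S →₀ k

/-- Basis element of `ℬ_S`, or `0` if `l` is not an ordered partition of `S`. -/
def mkS (S : Finset ℕ) (l : PSeq) : BS k S :=
  if h : Packed l ∧ unionOf l = S then Finsupp.single ⟨l, h⟩ 1 else 0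

instance (S S' : Finset ℕ) : Zero (BS k S ⊗[k] BS k S') :=
  (inferInstance : AddZeroClass (BS k S ⊗[k] BS k S')).toZero

/-- Concatenation `m_{U,V} : ℬ_U ⊗ ℬ_V → ℬ_S` (nonzero only when `U ⊔ V = S`),
as a bilinear map. -/
def mulInto (U V S : Finset ℕ) : BS k U →ₗ[k] BS k V →ₗ[k] BS k S :=
  Finsupp.lsum k fun w => LinearMap.toSpanSingleton k _ <|
    Finsupp.lsum k fun v => LinearMap.toSpanSingleton k _ (mkS k S (w.1 ++ v.1))

/-- Deconcatenation `δ_{U,V} : ℬ_S → ℬ_U ⊗ ℬ_V` (intended for `S = U ⊔ V`):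
a basis word goes to `w_U ⊗ w_V` if each of its blocks is contained in `U` or
in `V`, where `w_U` (resp. `w_V`) is the subsequence of blocks contained in `U`
(resp. `V`), and to `0` otherwise. -/
def deltaInto (S U V : Finset ℕ) : BS k S →ₗ[k] BS k U ⊗[k] BS k V :=
  Finsupp.lsum k fun w => LinearMap.toSpanSingleton k _ <|
    if ∀ B ∈ w.1, B ⊆ U ∨ B ⊆ V then
      mkS k U (w.1.filter fun B => B ⊆ U) ⊗ₜ[k] mkS k V (w.1.filter fun B => B ⊆ V)
    else 0

/-- Graded endomorphisms of `ℬ`: families `(f_S)_S` of endomorphisms of the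
graded components `ℬ_S`. -/
abbrev GEnd : Type := (S : Finset ℕ) → Module.End k (BS k S)

/-- The convolution of graded endomorphisms:
`(f∗g)_S = Σ_{U ⊔ V = S} m_{U,V} ∘ (f_U ⊗ g_V) ∘ δ_{U,V}`. -/
def gconv (f g : GEnd k) : GEnd k := fun S =>
  ∑ U ∈ S.powerset,
    (TensorProduct.lift (mulInto k U (S \ U) S)).comp
      ((TensorProduct.map (f U) (g (S \ U))).comp (deltaInto k S U (S \ U)))

/-- The characteristic map `1_∅`: the identity on `ℬ_∅` and `0` on `ℬ_S` for
`S ≠ ∅`. -/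
def gone : GEnd k := fun S => if S = ∅ then LinearMap.id else 0

/-- `1_C(S)`: the sum of all `1_w`, `w` an ordered partition of `S` of
type `C`. -/
def oneC (C : List ℕ) (S : Finset ℕ) : TD k :=
  ∑ᶠ w : PackedSeq,
    if unionOf w.1 = S ∧ w.1.map Finset.card = C then Finsupp.single w (1 : k) else 0

/-- The composition obtained by reading a matrix of nonnegative integers row by
row and deleting all zero entries. -/
def matComp {r c : ℕ} (a : Fin r → Fin c → ℕ) : List ℕ :=
  (List.finRange r).flatMap fun i =>
    ((List.finRange c).map fun j => a i j).filter fun m => m ≠ 0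

/-- `σ` is a permutation of `[n] = {1,…,n}`: it fixes everything outside
`{1,…,n}` (and hence permutes `{1,…,n}`). -/
def IsPermOn (n : ℕ) (σ : Equiv.Perm ℕ) : Prop := ∀ m ∉ Finset.Icc 1 n, σ m = m

/-- The sequence `({σ(1)},…,{σ(n)})` of singletons, written `1_σ` in `𝒯`. -/
def permList (n : ℕ) (σ : Equiv.Perm ℕ) : PSeq :=
  (List.range n).map fun i => {σ (i + 1)}

/-- An ordered partition `(S_1,…,S_k)` is increasing if `s < s'` whenever
`s ∈ S_i`, `s' ∈ S_j` and `i < j`. -/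
def Increasing (w : PSeq) : Prop := w.Pairwise fun S T => ∀ s ∈ S, ∀ t ∈ T, s < t

/-- `σ` is a shuffle of `(S_1,…,S_k)`: the elements of each `S_i` occur in
increasing order in the sequence `(σ(1),…,σ(n))`. -/
def IsShuffle (n : ℕ) (w : PSeq) (σ : Equiv.Perm ℕ) : Prop :=
  ∀ S ∈ w, ∀ i j : ℕ, 1 ≤ i → i < j → j ≤ n → σ i ∈ S → σ j ∈ S → σ i < σ j

/-- The descent set `D(τ) = {i | 1 ≤ i ≤ n-1, τ(i) > τ(i+1)}` of a permutation
of `[n]`. -/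
def Des (n : ℕ) (τ : Equiv.Perm ℕ) : Set ℕ := {i | 1 ≤ i ∧ i < n ∧ τ (i + 1) < τ i}

/-- The right action of a permutation `σ`:
`1_{(S_1,…,S_k)}·σ = 1_{(σ⁻¹(S_1),…,σ⁻¹(S_k))}`, extended linearly. -/
def actL (σ : Equiv.Perm ℕ) : TD k →ₗ[k] TD k :=
  Finsupp.lsum k fun w =>
    LinearMap.toSpanSingleton k _ (mk k (w.1.map fun S => S.image ⇑σ⁻¹))

section Aux

lemma unionOf_cons (S : Finset ℕ) (l : PSeq) : unionOf (S :: l) = S ∪ unionOf l := rfl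

lemma mem_unionOf {n : ℕ} {l : PSeq} : n ∈ unionOf l ↔ ∃ S ∈ l, n ∈ S := by
  induction l with
  | nil => simp [unionOf]
  | cons S l ih => simp [unionOf_cons, Finset.mem_union, ih]

lemma mem_reorder {S : Finset ℕ} {v w : PSeq} :
    S ∈ reorder v w ↔ S ∈ w ∧ ∃ T ∈ v, S ⊆ T := by
  simp only [reorder, List.mem_flatMap, List.mem_filter, decide_eq_true_eq]
  tauto

lemma unionOf_reorder {v w : PSeq} (h : ∀ S ∈ w, ∃ T ∈ v, S ⊆ T) :
    unionOf (reorder v w) = unionOf w := by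
  ext n
  simp only [mem_unionOf, mem_reorder]
  constructor
  · rintro ⟨S, ⟨hS, -⟩, hn⟩; exact ⟨S, hS, hn⟩
  · rintro ⟨S, hS, hn⟩; exact ⟨S, ⟨hS, h S hS⟩, hn⟩

lemma packed_reorder {v w : PSeq} (hv : Packed v) (hw : Packed w) :
    Packed (reorder v w) := by
  constructor
  · rw [reorder, List.pairwise_flatMap]
    refine ⟨fun T _ => List.Pairwise.sublist List.filter_sublist hw.1, ?_⟩
    refine hv.1.imp_of_mem ?_
    intro T T' _ _ hTT' x hx y hy
    have hxT : x ⊆ T := by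
      simpa using (List.mem_filter.mp hx).2
    have hyT : y ⊆ T' := by
      simpa using (List.mem_filter.mp hy).2
    exact hTT'.mono hxT hyT
  · intro S hS
    exact hw.2 S (mem_reorder.mp hS).1

lemma mem_refines {W : Finset ℕ} {u v : PSeq} :
    W ∈ refines u v ↔ ∃ S ∈ u, ∃ T ∈ v, W = S ∩ T ∧ W ≠ ∅ := by
  unfold refines
  simp only [List.mem_flatMap, List.mem_filter]
  constructor
  · rintro ⟨S, hS, hmem, hne⟩
    obtain ⟨T, hT, rfl⟩ := List.mem_map.mp hmem
    exact ⟨S, hS, T, hT, rfl, by simpa using hne⟩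
  · rintro ⟨S, hS, T, hT, rfl, hne⟩
    exact ⟨S, hS, List.mem_map.mpr ⟨T, hT, rfl⟩, by simpa using hne⟩

lemma unionOf_refines (u v : PSeq) : unionOf (refines u v) = unionOf u ∩ unionOf v := by
  ext n
  simp only [mem_unionOf, Finset.mem_inter]
  constructor
  · rintro ⟨W, hW, hn⟩
    obtain ⟨S, hS, T, hT, rfl, -⟩ := mem_refines.mp hW
    rcases Finset.mem_inter.mp hn with ⟨h1, h2⟩
    exact ⟨⟨S, hS, h1⟩, ⟨T, hT, h2⟩⟩
  · rintro ⟨⟨S, hS, hnS⟩, ⟨T, hT, hnT⟩⟩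
    refine ⟨S ∩ T, mem_refines.mpr ⟨S, hS, T, hT, rfl,
      Finset.ne_empty_of_mem (Finset.mem_inter.mpr ⟨hnS, hnT⟩)⟩,
      Finset.mem_inter.mpr ⟨hnS, hnT⟩⟩

lemma packed_refines {u v : PSeq} (hu : Packed u) (hv : Packed v) :
    Packed (refines u v) := by
  constructor
  · rw [refines, List.pairwise_flatMap]
    constructor
    · intro S _
      exact List.Pairwise.sublist List.filter_sublist
        (hv.1.map _ (fun a b hab =>
          hab.mono Finset.inter_subset_right Finset.inter_subset_right))
    · refine hu.1.imp_of_mem ?_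
      intro S S' _ _ hSS' x hx y hy
      have hxS : x ⊆ S := by
        obtain ⟨T, -, rfl⟩ := (List.mem_map.mp (List.filter_sublist.mem hx))
        exact Finset.inter_subset_left
      have hyS : y ⊆ S' := by
        obtain ⟨T, -, rfl⟩ := (List.mem_map.mp (List.filter_sublist.mem hy))
        exact Finset.inter_subset_left
      exact hSS'.mono hxS hyS
  · intro W hW
    exact (mem_refines.mp hW).choose_spec.2.choose_spec.2.2

lemma flatMap_filter_eq {α β : Type*} (l : List α) (p : α → Bool) (g : α → List β)
    (h : ∀ x ∈ l, p x = false → g x = []) :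
    (l.filter p).flatMap g = l.flatMap g := by
  induction l with
  | nil => rfl
  | cons a l ih =>
    have ih' := ih (fun x hx => h x (List.mem_cons_of_mem _ hx))
    by_cases hp : p a
    · simp [List.filter_cons, hp, ih']
    · simp only [Bool.not_eq_true] at hp
      simp [List.filter_cons, hp, h a (List.mem_cons_self) hp, ih']

lemma reorder_refines {u v w : PSeq} (hw : ∀ S ∈ w, S ≠ ∅) :
    reorder (refines u v) w = reorder u (reorder v w) := by
  unfold reorder refines
  rw [List.flatMap_assoc]
  congr 1
  funext S
  rw [flatMap_filter_eq _ _ _ (fun x _ hx => by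
      have hxe : x = ∅ := by simpa using hx
      subst hxe
      rw [List.filter_eq_nil_iff]
      intro B hB
      simpa using fun h => hw B hB (Finset.subset_empty.mp h)),
    List.flatMap_map, List.filter_flatMap]
  congr 1
  funext T
  rw [List.filter_filter]
  refine List.filter_congr fun B _ => ?_
  by_cases h1 : B ⊆ S <;> by_cases h2 : B ⊆ T <;>
    simp [h1, h2, Finset.subset_inter_iff]

lemma Tmap_single (u : PSeq) (w : PackedSeq) (b : k) :
    Tmap k u (Finsupp.single w b) = b • TmapB k u w := by
  simp [Tmap]

lemma Tmap_key (u v : PSeq) (hu : Packed u) (hv : Packed v) (w : PackedSeq) :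
    Tmap k u (TmapB k v w) =
      if unionOf u = unionOf v then TmapB k (refines u v) w else 0 := by
  simp only [TmapB]
  by_cases hcv : unionOf w.1 = unionOf v ∧ ∀ S ∈ w.1, ∃ T ∈ v, S ⊆ T
  · obtain ⟨h1, h2⟩ := hcv
    rw [if_pos ⟨h1, h2⟩]
    have hp : Packed (reorder v w.1) := packed_reorder hv w.2
    have hur : unionOf (reorder v w.1) = unionOf w.1 := unionOf_reorder h2
    have hmemr : ∀ S, S ∈ reorder v w.1 ↔ S ∈ w.1 := fun S =>
      ⟨fun h => (mem_reorder.mp h).1, fun h => mem_reorder.mpr ⟨h, h2 S h⟩⟩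
    rw [mk, dif_pos hp]
    have hTs : Tmap k u (Finsupp.single (⟨reorder v w.1, hp⟩ : PackedSeq) 1)
        = TmapB k u ⟨reorder v w.1, hp⟩ := by
      rw [Tmap_single, one_smul]
    rw [hTs, TmapB]
    by_cases heq : unionOf u = unionOf v
    · rw [if_pos heq]
      by_cases hcu : ∀ S ∈ w.1, ∃ U ∈ u, S ⊆ U
      · rw [if_pos ⟨hur.trans (h1.trans heq.symm),
          fun S hS => hcu S ((hmemr S).mp hS)⟩]
        have hcr : ∀ S ∈ w.1, ∃ W ∈ refines u v, S ⊆ W := by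
          intro S hS
          obtain ⟨U, hU, hSU⟩ := hcu S hS
          obtain ⟨T, hT, hST⟩ := h2 S hS
          refine ⟨U ∩ T, mem_refines.mpr ⟨U, hU, T, hT, rfl, fun hUT => ?_⟩,
            Finset.subset_inter hSU hST⟩
          exact w.2.2 S hS (Finset.subset_empty.mp
            (hUT ▸ Finset.subset_inter hSU hST))
        have hb : unionOf w.1 = unionOf (refines u v) := by
          rw [unionOf_refines, heq, Finset.inter_self, h1]
        rw [if_pos ⟨hb, hcr⟩, reorder_refines w.2.2]
      · rw [if_neg, if_neg]
        · rintro ⟨-, hcr⟩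
          refine hcu fun S hS => ?_
          obtain ⟨W, hW, hSW⟩ := hcr S hS
          obtain ⟨U, hU, T, hT, rfl, -⟩ := mem_refines.mp hW
          exact ⟨U, hU, hSW.trans Finset.inter_subset_left⟩
        · rintro ⟨-, hcl⟩
          exact hcu fun S hS => hcl S ((hmemr S).mpr hS)
    · rw [if_neg heq, if_neg]
      rintro ⟨hc1, -⟩
      exact heq ((hur.trans h1 ▸ hc1).symm)
  · rw [if_neg hcv, map_zero]
    split_ifs with heq hcond
    · refine absurd ⟨?_, fun S hS => ?_⟩ hcv
      · rw [hcond.1, unionOf_refines, heq, Finset.inter_self]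
      · obtain ⟨W, hW, hSW⟩ := hcond.2 S hS
        obtain ⟨U, hU, T, hT, rfl, -⟩ := mem_refines.mp hW
        exact ⟨T, hT, hSW.trans Finset.inter_subset_right⟩
    · rfl
    · rfl

end Aux

/-- For all packed sequences `u = (S_1,…,S_n)` and
`v = (T_1,…,T_k)`, the composite `T_u ∘ T_v` of endomorphisms of `ℬ` is `0`
if `∪ S_i ≠ ∪ T_j`, and equals `T_w` otherwise, where `w` is the refinement
`(S_1∩T_1,…,S_1∩T_k,…,S_n∩T_1,…,S_n∩T_k)` with empty intersections deleted.
In particular the twisted descent algebra of the free twisted bialgebra (the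
span of the `T_u`) is closed under composition. -/
theorem Tmap_comp (k : Type) [CommRing k] :
    (∀ u v : PackedSeq,
      (Tmap k u.1).comp (Tmap k v.1) =
        if unionOf u.1 = unionOf v.1 then Tmap k (refines u.1 v.1) else 0) ∧
    (∀ f g : Module.End k (TD k),
      f ∈ Submodule.span k {h | ∃ u : PackedSeq, h = Tmap k u.1} →
      g ∈ Submodule.span k {h | ∃ u : PackedSeq, h = Tmap k u.1} →
      f.comp g ∈ Submodule.span k {h | ∃ u : PackedSeq, h = Tmap k u.1}) := by
  have part1 : ∀ u v : PackedSeq,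
      (Tmap k u.1).comp (Tmap k v.1) =
        if unionOf u.1 = unionOf v.1 then Tmap k (refines u.1 v.1) else 0 := by
    intro u v
    have h := Tmap_key k u.1 v.1 u.2 v.2
    apply Finsupp.lhom_ext
    intro w b
    rw [LinearMap.comp_apply, Tmap_single, map_smul, h w]
    split_ifs with heq
    · rw [Tmap_single]
    · simp
  refine ⟨part1, ?_⟩
  set P := Submodule.span k {h | ∃ u : PackedSeq, h = Tmap k u.1} with hP
  have key2 : ∀ u v : PackedSeq, (Tmap k u.1).comp (Tmap k v.1) ∈ P := by
    intro u v
    rw [part1 u v]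
    split_ifs with h
    · exact Submodule.subset_span ⟨⟨refines u.1 v.1, packed_refines u.2 v.2⟩, rfl⟩
    · exact zero_mem _
  have step1 : ∀ (v : PackedSeq) (f : Module.End k (TD k)), f ∈ P →
      f.comp (Tmap k v.1) ∈ P := by
    intro v f hf
    have hle : P ≤ Submodule.comap
        ((LinearMap.llcomp k (TD k) (TD k) (TD k)).flip (Tmap k v.1)) P := by
      rw [hP, Submodule.span_le]
      rintro x ⟨u, rfl⟩
      exact Submodule.mem_comap.mpr (key2 u v)
    exact hle hf
  intro f g hf hg
  have hle : P ≤ Submodule.comap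
      (LinearMap.llcomp k (TD k) (TD k) (TD k) f) P := by
    rw [hP, Submodule.span_le]
    rintro x ⟨v, rfl⟩
    exact Submodule.mem_comap.mpr (step1 v f hf)
  exact hle hg

end TwistedDescent
end
end

section
/- Let (S_1,…,S_n) and (V_1,…,V_k) be packed sequences such that the sets S_1,…,S_n,V_1,…,V_k are pairwise disjoint. Then δ(1_{(S_1,…,S_n)} * 1_{(V_1,…,V_k)}) = δ(1_{(S_1,…,S_n)}) *₂ δ(1_{(V_1,…,V_k)}). (Thus (𝒯, *, δ) is a bialgebra in the category of 𝒫-graded modules.) -/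
/-!
Twisted descent algebras and the Solomon-Tits algebra (Patras-Schocker).

* A *packed sequence* is a finite sequence of pairwise disjoint nonempty
  finite subsets of ℕ.
* `TD k` is the free twisted descent algebra `𝒯`: the free `k`-module with
  basis `1_w`, `w` a packed sequence.
* `convL` is the convolution product `∗`, `compL` the composition product `∘`,
  `deltaL` the coproduct `δ`.
* `TD k` also realizes the free twisted bialgebra `ℬ` (whose basis words
  `α_{S_1}⋯α_{S_k}` are exactly the packed sequences); `Tmap u` realizes the
  convolution `1_{U_1} ∗ ⋯ ∗ 1_{U_l}` of characteristic maps as an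
  endomorphism of `ℬ`; `BS k S` is the graded piece `ℬ_S` with concatenation
  `mulInto` and deconcatenation `deltaInto`.
-/

open scoped TensorProduct

noncomputable section
namespace TwistedDescent

variable (k : Type) [CommRing k]

section Aux

variable {k}

lemma packed_of_append_left {a b : PSeq} (h : Packed (a ++ b)) : Packed a :=
  ⟨h.1.sublist (List.sublist_append_left a b), fun S hS => h.2 S (List.mem_append_left _ hS)⟩

lemma packed_of_append_right {a b : PSeq} (h : Packed (a ++ b)) : Packed b :=
  ⟨h.1.sublist (List.sublist_append_right a b), fun S hS => h.2 S (List.mem_append_right _ hS)⟩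

lemma convL_single (a b : PackedSeq) :
    convL k (Finsupp.single a 1) (Finsupp.single b 1) = mk k (a.1 ++ b.1) := by
  simp [convL, Finsupp.lsum_single]

lemma convL_mk (A B : PSeq) : convL k (mk k A) (mk k B) = mk k (A ++ B) := by
  by_cases hA : Packed A
  · by_cases hB : Packed B
    · rw [show mk k A = Finsupp.single ⟨A, hA⟩ 1 from dif_pos hA,
        show mk k B = Finsupp.single ⟨B, hB⟩ 1 from dif_pos hB, convL_single]
    · rw [show mk k B = 0 from dif_neg hB, map_zero,
        show mk k (A ++ B) = 0 from dif_neg fun hh => hB (packed_of_append_right hh)]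
  · rw [show mk k A = 0 from dif_neg hA, map_zero, LinearMap.zero_apply,
      show mk k (A ++ B) = 0 from dif_neg fun hh => hA (packed_of_append_left hh)]

lemma deltaL_single (a : PackedSeq) :
    deltaL k (Finsupp.single a (1 : k)) = deltaB k a := by
  simp [deltaL, Finsupp.lsum_single]

lemma conv2_tmul (a b c d : TD k) :
    conv2 k (a ⊗ₜ[k] b) (c ⊗ₜ[k] d) = convL k a c ⊗ₜ[k] convL k b d := by
  simp [conv2, TensorProduct.homTensorHomMap_apply]

/-- The basic summand of `deltaB`. -/
def term (k : Type) [CommRing k] (p : List (Finset ℕ × Finset ℕ)) : TD k ⊗[k] TD k :=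
  mk k (strip (p.map Prod.fst)) ⊗ₜ[k] mk k (strip (p.map Prod.snd))

lemma deltaB_eq (a : PackedSeq) :
    deltaB k a = ((splittings a.1).map (term k)).sum := rfl

lemma term_append (p q : List (Finset ℕ × Finset ℕ)) :
    term k (p ++ q) = conv2 k (term k p) (term k q) := by
  rw [term, term, term, conv2_tmul, convL_mk, convL_mk]
  simp [strip, List.filter_append]

lemma sections_append {α : Type*} (L1 L2 : List (List α)) :
    (L1 ++ L2).sections = L2.sections.flatMap fun q => L1.sections.map (· ++ q) := by
  induction L1 with
  | nil => simp
  | cons a L1 ih =>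
    simp only [List.cons_append, List.sections, List.append_eq, ih, List.flatMap_assoc,
      List.flatMap_map, List.map_flatMap, List.map_map, Function.comp_def]

lemma sum_flatMap {α M : Type*} [AddCommMonoid M] (l : List α)
    (f : α → List M) : (l.flatMap f).sum = (l.map fun a => (f a).sum).sum := by
  induction l with
  | nil => rfl
  | cons a t ih => simp [List.flatMap_cons, ih]

lemma conv2_sum_left {X : Type*} (l : List X) (f : X → TD k ⊗[k] TD k) (y : TD k ⊗[k] TD k) :
    conv2 k (l.map f).sum y = (l.map fun p => conv2 k (f p) y).sum := by
  induction l with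
  | nil => simp
  | cons a t ih => simp [map_add, LinearMap.add_apply, ih]

lemma conv2_sum_right {X : Type*} (l : List X) (g : X → TD k ⊗[k] TD k) (x : TD k ⊗[k] TD k) :
    conv2 k x (l.map g).sum = (l.map fun q => conv2 k x (g q)).sum := by
  induction l with
  | nil => simp
  | cons a t ih => simp [map_add, ih]

lemma splittings_append (a b : PSeq) :
    splittings (a ++ b) = (splittings b).flatMap fun q => (splittings a).map (· ++ q) := by
  rw [splittings, List.map_append, sections_append]; rfl

end Aux

/-- If `(S_1,…,S_n)` and `(V_1,…,V_k)` are packed sequences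
such that `S_1,…,S_n,V_1,…,V_k` are pairwise disjoint, then
`δ(1_{(S_1,…,S_n)} ∗ 1_{(V_1,…,V_k)}) = δ(1_{(S_1,…,S_n)}) ∗₂ δ(1_{(V_1,…,V_k)})`.
(Thus `(𝒯, ∗, δ)` is a bialgebra in the category of `𝒫`-graded modules.) -/
theorem delta_conv_of_disjoint (k : Type) [CommRing k] (w v : PackedSeq)
    (h : Packed (w.1 ++ v.1)) :
    deltaL k (convL k (Finsupp.single w 1) (Finsupp.single v 1))
      = conv2 k (deltaL k (Finsupp.single w 1)) (deltaL k (Finsupp.single v 1)) := by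
  rw [convL_single, show mk k (w.1 ++ v.1) = Finsupp.single ⟨w.1 ++ v.1, h⟩ 1 from dif_pos h,
    deltaL_single, deltaL_single, deltaL_single, deltaB_eq, deltaB_eq, deltaB_eq]
  show ((splittings (w.1 ++ v.1)).map (term k)).sum = _
  rw [splittings_append, List.map_flatMap, sum_flatMap, conv2_sum_right]
  refine congrArg List.sum (List.map_congr_left fun q _ => ?_)
  rw [List.map_map, conv2_sum_left]
  refine congrArg List.sum (List.map_congr_left fun p _ => ?_)
  exact term_append p q

end TwistedDescent
end
end
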